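/- Let N ≥ 1, J = ⌊(N+1)/2⌋, let ψ : ℂ → ℝ, let P = {P₁,…,P_N} be a complete set of monic polynomials, and let L+2M = N. Let C be the 2J×2J antisymmetric matrix with C[j,k] = ⟨P_j,P_k⟩_ℂ if j,k ≤ N and C[j,k] = 0 otherwise. Then for every t ∈ I_{2M}^N, assuming absolute integrability, ((−i)^M / M!) ∫_{ℂ^M} {∏_{m=1}^M φ(β_m)φ(β̄_m) sgn(Im β_m)} · det W^β_{i,t} dλ_{2M}(β) = Pf C_{t_∘}, where W^β_{i,t} is the 2M×2M minor with entries W^β_{i,t}[j,k] = P_{t(k)}(γ_j) for γ = (β̄₁,β₁,…,β̄_M,β_M). -/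

import Mathlib

open MeasureTheory Finset

noncomputable section

/-- Pfaffian of a `2J × 2J` matrix, via the sum over the symmetric group. -/
def pf {K : Type*} [Field K] {J : ℕ} (U : Matrix (Fin (2*J)) (Fin (2*J)) K) : K :=
  ((2:K)^J * (Nat.factorial J : K))⁻¹ *
    ∑ τ : Equiv.Perm (Fin (2*J)), ((Equiv.Perm.sign τ : ℤ) : K) *
      ∏ j : Fin J, U (τ ⟨2*(j:ℕ), by have := j.isLt; omega⟩)
                     (τ ⟨2*(j:ℕ)+1, by have := j.isLt; omega⟩)

/-- The complementary error function `erfc(x) = (2/√π) ∫_x^∞ e^{-t²} dt`. -/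
def erfc (x : ℝ) : ℝ := (2 / Real.sqrt Real.pi) * ∫ t in Set.Ioi x, Real.exp (-t^2)

/-- The weight `φ(γ) = exp(-γ²/2) (erfc(√2 |Im γ|))^{1/2} ψ(γ)`. -/
def phi (ψ : ℂ → ℝ) (γ : ℂ) : ℂ :=
  Complex.exp (-γ^2/2) * ((erfc (Real.sqrt 2 * |γ.im|) ^ (1/2 : ℝ) : ℝ) : ℂ) * (ψ γ : ℂ)

/-- The skew-symmetric inner product
`⟨P,Q⟩_ℂ = -2i ∫_ℂ φ(β)φ(β̄) P(β̄)Q(β) sgn(Im β) dλ₂(β)`. -/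
def innerC (ψ : ℂ → ℝ) (P Q : Polynomial ℂ) : ℂ :=
  (-2) * Complex.I * ∫ β : ℂ, phi ψ β * phi ψ ((starRingEnd ℂ) β) *
    P.eval ((starRingEnd ℂ) β) * Q.eval β * ((Real.sign β.im : ℝ) : ℂ)

/-- The `2J × 2J` antisymmetric matrix `C`, `J = ⌊(N+1)/2⌋` (`0`-based indices; `P n`
is the monic polynomial of degree `n`, the paper's `P_{n+1}`). -/
def Cmat (N : ℕ) (ψ : ℂ → ℝ) (P : ℕ → Polynomial ℂ) :
    Matrix (Fin (2*((N+1)/2))) (Fin (2*((N+1)/2))) ℂ :=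
  fun j k => if (j:ℕ) < N ∧ (k:ℕ) < N then innerC ψ (P (j:ℕ)) (P (k:ℕ)) else 0

/-- The vector `γ = (β̄₁, β₁, …, β̄_M, β_M)`. -/
def betaVec {M : ℕ} (β : Fin M → ℂ) : Fin (2*M) → ℂ :=
  fun j => if (j:ℕ) % 2 = 0
    then (starRingEnd ℂ) (β ⟨(j:ℕ)/2, by have := j.isLt; omega⟩)
    else β ⟨(j:ℕ)/2, by have := j.isLt; omega⟩

/-
De Bruijn's argument: expand the determinant along permutations. Each term of the
expansion is a product over `m` of functions of the single variable `β m`, since the rows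
`2m` and `2m+1` of `W^β` are evaluated at `β̄_m` and `β_m`; by Fubini its integral is a
product of entries of `C`. Summing over permutations reproduces the permutation-sum
definition of the Pfaffian, and the constants `(-i)^M / M!`, `(-2i)^{-M}` and `2^M M!` cancel.
-/

theorem Fin.prod_univ_two_mul {β : Type*} [CommMonoid β] {n : ℕ} (f : Fin (2*n) → β) :
    ∏ j, f j = ∏ m : Fin n,
      f ⟨2*(m:ℕ), by have := m.isLt; omega⟩ * f ⟨2*(m:ℕ)+1, by have := m.isLt; omega⟩ := by
  let e : Fin n × Fin 2 ≃ Fin (2*n) := finProdFinEquiv.trans (finCongr (mul_comm n 2))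
  have he : ∀ p, (e p : ℕ) = 2 * p.1 + p.2 := fun p => by
    simp only [e, finProdFinEquiv, Equiv.trans_apply, Equiv.coe_fn_mk, finCongr_apply,
      Fin.val_cast]
    ring
  rw [← e.prod_comp f, Fintype.prod_prod_type]
  refine Finset.prod_congr rfl fun m _ => ?_
  rw [Fin.prod_univ_two]
  congr 2 <;> ext <;> simp [he]

section Pfaffian

variable {K : Type*} [Field K] {J : ℕ}

theorem pf_const_mul (c : K) (U : Fin (2*J) → Fin (2*J) → K) :
    pf (fun i k => c * U i k) = c ^ J * pf U := by
  simp only [pf, Finset.prod_mul_distrib, Finset.prod_const,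
    Finset.card_univ, Fintype.card_fin, Finset.mul_sum]
  refine Finset.sum_congr rfl fun τ _ => ?_
  ring

theorem sum_sign_mul_prod_pairs_eq_pf [CharZero K] (U : Fin (2*J) → Fin (2*J) → K) :
    ∑ τ : Equiv.Perm (Fin (2*J)), ((Equiv.Perm.sign τ : ℤ) : K) *
      ∏ j : Fin J, U (τ ⟨2*(j:ℕ), by have := j.isLt; omega⟩)
                     (τ ⟨2*(j:ℕ)+1, by have := j.isLt; omega⟩)
      = (2:K)^J * J.factorial * pf U := by
  have : (2:K)^J * J.factorial ≠ 0 :=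
    mul_ne_zero (pow_ne_zero _ two_ne_zero) (Nat.cast_ne_zero.mpr J.factorial_ne_zero)
  simp only [pf, mul_inv_cancel_left₀ this]

end Pfaffian

section DeBruijn

variable {M : ℕ}

theorem betaVec_two_mul (β : Fin M → ℂ) (m : Fin M) :
    betaVec β ⟨2*(m:ℕ), by have := m.isLt; omega⟩ = (starRingEnd ℂ) (β m) := by
  have h1 : (2*(m:ℕ)) % 2 = 0 := by omega
  have h2 : (2*(m:ℕ)) / 2 = (m:ℕ) := by omega
  simp only [betaVec, h1, h2, Fin.eta, if_true]

theorem betaVec_two_mul_add_one (β : Fin M → ℂ) (m : Fin M) :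
    betaVec β ⟨2*(m:ℕ)+1, by have := m.isLt; omega⟩ = β m := by
  have h1 : (2*(m:ℕ)+1) % 2 = 1 := by omega
  have h2 : (2*(m:ℕ)+1) / 2 = (m:ℕ) := by omega
  simp only [betaVec, h1, h2, Fin.eta, one_ne_zero, if_false]

def pairIntegrand (w : ℂ → ℂ) (f : Fin (2*M) → ℂ → ℂ) (i k : Fin (2*M)) (z : ℂ) : ℂ :=
  w z * f i ((starRingEnd ℂ) z) * f k z

theorem prod_mul_det_betaVec (w : ℂ → ℂ) (f : Fin (2*M) → ℂ → ℂ) (β : Fin M → ℂ) :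
    (∏ m, w (β m)) * (Matrix.of fun j k : Fin (2*M) => f k (betaVec β j)).det
      = ∑ σ : Equiv.Perm (Fin (2*M)), ((Equiv.Perm.sign σ : ℤ) : ℂ) *
          ∏ m : Fin M, pairIntegrand w f (σ ⟨2*(m:ℕ), by have := m.isLt; omega⟩)
            (σ ⟨2*(m:ℕ)+1, by have := m.isLt; omega⟩) (β m) := by
  rw [← Matrix.det_transpose, Matrix.det_apply', Finset.mul_sum]
  refine Finset.sum_congr rfl fun σ _ => ?_
  simp only [Matrix.transpose_apply, Matrix.of_apply]
  rw [Fin.prod_univ_two_mul (fun i => f (σ i) (betaVec β i)), mul_left_comm,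
    ← Finset.prod_mul_distrib]
  congr 1
  refine Finset.prod_congr rfl fun m _ => ?_
  rw [betaVec_two_mul, betaVec_two_mul_add_one, pairIntegrand, mul_assoc]

theorem integral_prod_mul_det_betaVec (μ : Measure ℂ) [SigmaFinite μ] (w : ℂ → ℂ)
    (f : Fin (2*M) → ℂ → ℂ) (hf : ∀ i k, Integrable (pairIntegrand w f i k) μ) :
    ∫ β : Fin M → ℂ, (∏ m, w (β m)) * (Matrix.of fun j k : Fin (2*M) => f k (betaVec β j)).det
        ∂Measure.pi (fun _ => μ)
      = (2:ℂ)^M * M.factorial * pf (fun i k => ∫ z, pairIntegrand w f i k z ∂μ) := by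
  simp_rw [prod_mul_det_betaVec]
  rw [integral_finsetSum _ fun σ _ => (Integrable.fintype_prod fun m => hf _ _).const_mul _,
    ← sum_sign_mul_prod_pairs_eq_pf]
  refine Finset.sum_congr rfl fun σ _ => ?_
  rw [integral_const_mul, integral_fintype_prod_eq_prod]

end DeBruijn

theorem Cmat_orderEmbOfFin_image_castLE {N M : ℕ} (ψ : ℂ → ℝ) (P : ℕ → Polynomial ℂ)
    (s : Finset (Fin N)) (hs : s.card = 2*M) (hle : N ≤ 2*((N+1)/2))
    (hs' : (s.image (Fin.castLE hle)).card = 2*M) (j k : Fin (2*M)) :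
    Cmat N ψ P ((s.image (Fin.castLE hle)).orderEmbOfFin hs' j)
        ((s.image (Fin.castLE hle)).orderEmbOfFin hs' k)
      = innerC ψ (P (s.orderEmbOfFin hs j)) (P (s.orderEmbOfFin hs k)) := by
  have hcast : ⇑((s.image (Fin.castLE hle)).orderEmbOfFin hs')
      = Fin.castLE hle ∘ s.orderEmbOfFin hs :=
    (Finset.orderEmbOfFin_unique _
      (fun i => Finset.mem_image_of_mem _ (Finset.orderEmbOfFin_mem s hs i))
      ((Fin.strictMono_castLE hle).comp (s.orderEmbOfFin hs).strictMono)).symm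
  simp only [hcast, Function.comp_apply, Cmat, Fin.val_castLE, Fin.is_lt, and_self, if_true]

/-- **Lemma 8 (Sinclair).**  For every `t ∈ I_{2M}^N` (encoded by its image, the
`2M`-element subset `s` of `{0,…,N−1}`, with `t = s.orderEmbOfFin` and `t_∘` the
corresponding subset of `{0,…,2J−1}`),
`((−i)^M/M!) ∫_{ℂ^M} {∏ φ(β_m)φ(β̄_m) sgn(Im β_m)} det W^β_{i,t} dλ_{2M}(β) = Pf C_{t_∘}`,
assuming all integrals involved converge absolutely. -/
theorem complex_integral_eq_pfaffian_minor (N M : ℕ)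
    (ψ : ℂ → ℝ) (P : ℕ → Polynomial ℂ)
    (s : Finset (Fin N)) (hs : s.card = 2*M)
    (hIntC : ∀ p < N, ∀ q < N, Integrable (fun β : ℂ =>
      phi ψ β * phi ψ ((starRingEnd ℂ) β) * (P p).eval ((starRingEnd ℂ) β) *
        (P q).eval β * ((Real.sign β.im : ℝ) : ℂ))) :
    (-Complex.I)^M * ((Nat.factorial M : ℕ) : ℂ)⁻¹ *
      (∫ β : Fin M → ℂ,
        (∏ m : Fin M, phi ψ (β m) * phi ψ ((starRingEnd ℂ) (β m)) *
          ((Real.sign ((β m).im) : ℝ) : ℂ)) *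
          Matrix.det (Matrix.of fun j k : Fin (2*M) =>
            (P ((s.orderEmbOfFin hs k : Fin N) : ℕ)).eval (betaVec β j)))
      = pf (fun j k : Fin (2*M) =>
          Cmat N ψ P
            ((s.image (Fin.castLE (by omega : N ≤ 2*((N+1)/2)))).orderEmbOfFin
              (by rw [Finset.card_image_of_injective _ (Fin.castLE_injective _), hs]) j)
            ((s.image (Fin.castLE (by omega : N ≤ 2*((N+1)/2)))).orderEmbOfFin
              (by rw [Finset.card_image_of_injective _ (Fin.castLE_injective _), hs]) k)) := by
  set w : ℂ → ℂ := fun z => phi ψ z * phi ψ ((starRingEnd ℂ) z) * ((Real.sign z.im : ℝ) : ℂ)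
  set f : Fin (2*M) → ℂ → ℂ := fun k => (P (s.orderEmbOfFin hs k)).eval
  have hinner : ∀ i k, innerC ψ (P (s.orderEmbOfFin hs i)) (P (s.orderEmbOfFin hs k))
      = (-2 * Complex.I) * ∫ z, pairIntegrand w f i k z := fun i k => by
    rw [innerC]; congr 2; ext z; simp only [pairIntegrand, w, f]; ring
  have hint : ∀ i k, Integrable (pairIntegrand w f i k) :=
    fun i k => (hIntC _ (s.orderEmbOfFin hs i).isLt _ (s.orderEmbOfFin hs k).isLt).congr
      (.of_forall fun z => by simp only [pairIntegrand, w, f]; ring)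
  change (-Complex.I)^M * _ * ∫ β : Fin M → ℂ,
      (∏ m, w (β m)) * (Matrix.of fun j k : Fin (2*M) => f k (betaVec β j)).det = _
  simp only [Cmat_orderEmbOfFin_image_castLE ψ P s hs, hinner, pf_const_mul]
  rw [volume_pi (α := fun _ : Fin M => ℂ), integral_prod_mul_det_betaVec volume w f hint]
  have hM : (M.factorial : ℂ) ≠ 0 := Nat.cast_ne_zero.mpr M.factorial_ne_zero
  rw [show -2 * Complex.I = -Complex.I * 2 by ring, mul_pow]
  field_simp
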